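/- Let S be a finite sample of labeled examples of a total Boolean function f on {0,1}^n with DNF size s, and suppose every partial function obtained from f^S by deleting (making undefined) some subset of positive examples, while retaining at least one positive example, has a seed of size at most q. Then the seed covering method produces a DNF formula consistent with S having fewer than (2n+1)^q + 1 terms. In particular, if f has DNF size greater than (2n+1)^q, then some such partial function has no seed of size at most q. -/

import Mathlib

/-- `x` satisfies every literal in the monomial `T`. -/
def covers {n : ℕ} (T : Finset (Fin n × Bool)) (x : Fin n → Bool) : Prop :=
  ∀ l ∈ T, x l.1 = l.2

/-- A DNF formula (finite set of terms) evaluates to true on `x`. -/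
def DNFeval {n : ℕ} (φ : Finset (Finset (Fin n × Bool))) (x : Fin n → Bool) : Prop :=
  ∃ T ∈ φ, covers T x

/-- The DNF `φ` is consistent with the partial function `g`. -/
def consistentDNF {n : ℕ} (φ : Finset (Finset (Fin n × Bool)))
    (g : (Fin n → Bool) → Option Bool) : Prop :=
  ∀ x, (g x = some true → DNFeval φ x) ∧ (g x = some false → ¬ DNFeval φ x)

/-- `g` has a seed of size at most `q`: a monomial `T` with at most `q` literals
covering a positive example of `g`, such that the projection `g_T` is consistent with
a monomial. -/
def hasSeed {n : ℕ} (g : (Fin n → Bool) → Option Bool) (q : ℕ) : Prop :=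
  ∃ T : Finset (Fin n × Bool), T.card ≤ q ∧
    (∃ x, covers T x ∧ g x = some true) ∧
    (∃ M : Finset (Fin n × Bool), ∀ x, covers T x →
      (g x = some true → covers M x) ∧ (g x = some false → ¬ covers M x))

/-- `F'` is obtained from `F` by deleting (making undefined) a subset of the positive
examples. -/
def posDeletion {n : ℕ} (F F' : (Fin n → Bool) → Option Bool) : Prop :=
  ∀ x, F' x = F x ∨ (F x = some true ∧ F' x = none)

/-!
Run the seed covering method on the set `P` of positive examples still uncovered. The
hypothesis applied to `F` with the positives outside `P` deleted yields a seed `T`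
covering a point of `P`, together with a monomial `M` that accepts the points of `P`
under `T` and rejects the negatives under `T`. The term `T'` made of all literals shared
by the points of `P` under `T` contains `T ∪ M`, so it rejects every negative example
and covers every point of `P` under `T`. Hence after adding `T'` no remaining positive
example satisfies `T`: every seed serves at most once, and there are at most
`(2n+1)^q` monomials with at most `q` literals.
-/

open Finset

lemma card_filter_card_le_le_pow {α : Type*} [Fintype α] (q : ℕ) :
    #{T : Finset α | T.card ≤ q} ≤ (Fintype.card α + 1) ^ q := by
  classical
  calc #{T : Finset α | T.card ≤ q}
      ≤ #(univ : Finset (Fin q → Option α)) := by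
        refine card_le_card_of_injOn (fun T i => T.toList[(i : ℕ)]?)
          (fun _ _ => mem_coe.2 (mem_univ _)) ?_
        intro T₁ h₁ T₂ h₂ heq
        have h₁ : T₁.card ≤ q := (mem_filter.1 h₁).2
        have h₂ : T₂.card ≤ q := (mem_filter.1 h₂).2
        have hlist : T₁.toList = T₂.toList := by
          refine List.ext_getElem? fun m => ?_
          by_cases hm : m < q
          · exact congrFun heq ⟨m, hm⟩
          · rw [List.getElem?_eq_none_iff.2, List.getElem?_eq_none_iff.2] <;>
              rw [length_toList] <;> omega
        rw [← toList_toFinset T₁, ← toList_toFinset T₂, hlist]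
    _ = (Fintype.card α + 1) ^ q := by simp

section SeedCovering

variable {n q : ℕ}

instance (T : Finset (Fin n × Bool)) : DecidablePred (covers T) :=
  fun x => inferInstanceAs (Decidable (∀ l ∈ T, x l.1 = l.2))

lemma covers_of_subset {T T' : Finset (Fin n × Bool)} {x : Fin n → Bool} (h : T ⊆ T')
    (hx : covers T' x) : covers T x :=
  fun l hl => hx l (h hl)

def restrictPositives (F : (Fin n → Bool) → Option Bool) (P : Finset (Fin n → Bool)) :
    (Fin n → Bool) → Option Bool :=
  fun x => if F x = some true ∧ x ∉ P then none else F x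

lemma posDeletion_restrictPositives (F : (Fin n → Bool) → Option Bool)
    (P : Finset (Fin n → Bool)) : posDeletion F (restrictPositives F P) := by
  intro x
  by_cases h : F x = some true ∧ x ∉ P <;> simp [restrictPositives, h]

lemma restrictPositives_eq_some_true_iff {F : (Fin n → Bool) → Option Bool}
    {P : Finset (Fin n → Bool)} (hP : ∀ x ∈ P, F x = some true) (x : Fin n → Bool) :
    restrictPositives F P x = some true ↔ x ∈ P := by
  by_cases hx : x ∈ P
  · simp [restrictPositives, hx, hP x hx]
  · by_cases hFx : F x = some true <;> simp [restrictPositives, hx, hFx]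

lemma restrictPositives_eq_some_false_iff (F : (Fin n → Bool) → Option Bool)
    (P : Finset (Fin n → Bool)) (x : Fin n → Bool) :
    restrictPositives F P x = some false ↔ F x = some false := by
  by_cases hFx : F x = some true <;> simp_all [restrictPositives]

def candidateSeeds (q : ℕ) (P : Finset (Fin n → Bool)) :
    Finset (Finset (Fin n × Bool)) :=
  {T | T.card ≤ q ∧ ∃ x ∈ P, covers T x}

lemma mem_candidateSeeds {P : Finset (Fin n → Bool)} {T : Finset (Fin n × Bool)} :
    T ∈ candidateSeeds q P ↔ T.card ≤ q ∧ ∃ x ∈ P, covers T x := by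
  simp [candidateSeeds]

lemma card_candidateSeeds_le (P : Finset (Fin n → Bool)) :
    (candidateSeeds q P).card ≤ (2 * n + 1) ^ q :=
  calc (candidateSeeds q P).card
      ≤ #{T : Finset (Fin n × Bool) | T.card ≤ q} :=
        card_le_card fun _ hT => mem_filter.2 ⟨mem_univ _, (mem_candidateSeeds.1 hT).1⟩
    _ ≤ (Fintype.card (Fin n × Bool) + 1) ^ q := card_filter_card_le_le_pow q
    _ = (2 * n + 1) ^ q := by simp [mul_comm]

lemma exists_seed_of_subset_positives {F : (Fin n → Bool) → Option Bool}
    (hseed : ∀ F' : (Fin n → Bool) → Option Bool,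
      posDeletion F F' → (∃ x, F' x = some true) → hasSeed F' q)
    {P : Finset (Fin n → Bool)} (hP : ∀ x ∈ P, F x = some true) (hne : P.Nonempty) :
    ∃ T ∈ candidateSeeds q P, ∃ M : Finset (Fin n × Bool),
      (∀ y ∈ P, covers T y → covers M y) ∧
      (∀ z, F z = some false → covers T z → ¬ covers M z) := by
  have hpos := restrictPositives_eq_some_true_iff (F := F) hP
  obtain ⟨x, hx⟩ := hne
  obtain ⟨T, hTcard, ⟨x₀, hx₀T, hx₀⟩, M, hM⟩ :=
    hseed _ (posDeletion_restrictPositives F P) ⟨x, (hpos x).2 hx⟩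
  refine ⟨T, mem_candidateSeeds.2 ⟨hTcard, x₀, (hpos x₀).1 hx₀, hx₀T⟩, M,
    fun y hy hyT => (hM y hyT).1 ((hpos y).2 hy), fun z hz hzT => (hM z hzT).2 ?_⟩
  exact (restrictPositives_eq_some_false_iff F P z).2 hz

/-- The term `T'` that the seed covering method builds from the seed `T`. -/
def seedTerm (P : Finset (Fin n → Bool)) (T : Finset (Fin n × Bool)) :
    Finset (Fin n × Bool) :=
  {l | ∀ y ∈ P, covers T y → y l.1 = l.2}

lemma covers_seedTerm {P : Finset (Fin n → Bool)} {T : Finset (Fin n × Bool)}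
    {y : Fin n → Bool} (hy : y ∈ P) (hyT : covers T y) : covers (seedTerm P T) y :=
  fun _ hl => (mem_filter.1 hl).2 y hy hyT

lemma subset_seedTerm {P : Finset (Fin n → Bool)} {T M : Finset (Fin n × Bool)}
    (hM : ∀ y ∈ P, covers T y → covers M y) : M ⊆ seedTerm P T :=
  fun l hl => mem_filter.2 ⟨mem_univ _, fun y hy hyT => hM y hy hyT l hl⟩

lemma not_covers_seedTerm {F : (Fin n → Bool) → Option Bool} {P : Finset (Fin n → Bool)}
    {T M : Finset (Fin n × Bool)} (hMpos : ∀ y ∈ P, covers T y → covers M y)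
    (hMneg : ∀ z, F z = some false → covers T z → ¬ covers M z)
    {z : Fin n → Bool} (hz : F z = some false) : ¬ covers (seedTerm P T) z := fun hzT =>
  hMneg z hz (covers_of_subset (subset_seedTerm fun _ _ h => h) hzT)
    (covers_of_subset (subset_seedTerm hMpos) hzT)

lemma candidateSeeds_filter_not_covers_seedTerm_subset (P : Finset (Fin n → Bool))
    (T : Finset (Fin n × Bool)) :
    candidateSeeds q {y ∈ P | ¬ covers (seedTerm P T) y} ⊆ (candidateSeeds q P).erase T := by
  intro T₂ hT₂
  obtain ⟨hcard, y, hy, hyT₂⟩ := mem_candidateSeeds.1 hT₂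
  obtain ⟨hyP, hyT⟩ := mem_filter.1 hy
  refine mem_erase.2 ⟨?_, mem_candidateSeeds.2 ⟨hcard, y, hyP, hyT₂⟩⟩
  rintro rfl
  exact hyT (covers_seedTerm hyP hyT₂)

theorem exists_dnf_card_le_card_candidateSeeds {F : (Fin n → Bool) → Option Bool}
    (hseed : ∀ F' : (Fin n → Bool) → Option Bool,
      posDeletion F F' → (∃ x, F' x = some true) → hasSeed F' q)
    (P : Finset (Fin n → Bool)) (hP : ∀ x ∈ P, F x = some true) :
    ∃ φ : Finset (Finset (Fin n × Bool)), φ.card ≤ (candidateSeeds q P).card ∧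
      (∀ x ∈ P, DNFeval φ x) ∧ ∀ x, F x = some false → ¬ DNFeval φ x := by
  induction hk : (candidateSeeds q P).card using Nat.strong_induction_on generalizing P with
  | _ k ih =>
  rcases P.eq_empty_or_nonempty with rfl | hne
  · exact ⟨∅, by simp, by simp, by simp [DNFeval]⟩
  obtain ⟨T, hT, M, hMpos, hMneg⟩ := exists_seed_of_subset_positives hseed hP hne
  set P' := {y ∈ P | ¬ covers (seedTerm P T) y}
  have hlt : (candidateSeeds q P').card < k := hk ▸ card_lt_card
    ((candidateSeeds_filter_not_covers_seedTerm_subset P T).trans_ssubset (erase_ssubset hT))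
  obtain ⟨φ, hcard, hpos, hneg⟩ := ih _ hlt P' (fun x hx => hP x (mem_filter.1 hx).1) rfl
  refine ⟨insert (seedTerm P T) φ, (card_insert_le _ _).trans (by omega), ?_, ?_⟩
  · intro x hx
    by_cases hxT : covers (seedTerm P T) x
    · exact ⟨_, mem_insert_self _ _, hxT⟩
    · obtain ⟨T₂, hT₂, hxT₂⟩ := hpos x (mem_filter.2 ⟨hx, hxT⟩)
      exact ⟨T₂, mem_insert_of_mem hT₂, hxT₂⟩
  · rintro x hx ⟨T₂, hT₂, hxT₂⟩
    rcases mem_insert.1 hT₂ with rfl | hT₂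
    · exact not_covers_seedTerm hMpos hMneg hx hxT₂
    · exact hneg x hx ⟨T₂, hT₂, hxT₂⟩

end SeedCovering

/-- Let `F = f^S` be the partial function given by a sample `S` of a Boolean function.
If every partial function obtained from `F` by deleting some subset of its positive
examples, while retaining at least one positive example, has a seed of size at most
`q`, then (as produced by the seed covering method, which uses each of the at most
`(2n+1)^q` possible seeds at most once) there is a DNF formula consistent with `F`
having fewer than `(2n+1)^q + 1` terms.  In particular, if every DNF consistent with
`F` needs more than `(2n+1)^q` terms, then some such partial function has no seed of
size at most `q`. -/
theorem stmt19 {n q : ℕ} (F : (Fin n → Bool) → Option Bool)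
    (hseed : ∀ F' : (Fin n → Bool) → Option Bool,
      posDeletion F F' → (∃ x, F' x = some true) → hasSeed F' q) :
    ∃ φ : Finset (Finset (Fin n × Bool)),
      φ.card < (2 * n + 1) ^ q + 1 ∧ consistentDNF φ F := by
  classical
  obtain ⟨φ, hcard, hpos, hneg⟩ :=
    exists_dnf_card_le_card_candidateSeeds hseed {x | F x = some true} (by simp)
  exact ⟨φ, Nat.lt_succ_of_le (hcard.trans (card_candidateSeeds_le _)),
    fun x => ⟨fun hx => hpos x (by simpa using hx), hneg x⟩⟩
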